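/- Fix reals α > 0 and 0 < β < 1 and an integer l ≥ 1, and define τ(d, q) = 1 if q divides d^l, and τ(d, q) = max{−α r^{−β}, −1} otherwise, where r = q / gcd(q, d^l). Let p be a prime, let μ be a real with 1 > μ > 1/2, and let a ≥ 1 be an integer satisfying p^{βal} ≥ (α p^{−β}(1 − μ) + 2μ − 1)/(μ(2μ − 1)). Then for any positive integers s and k, ∑_{j=0}^{s} μ^j τ(p^{aj}, p^k) ≥ −μ^{s+1}/(1 − μ). -/

import Mathlib

/-- `τ(d, q) = 1` if `q ∣ d^l`, and `max{−a r^{−b}, −1}` otherwise, where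
`r = q / gcd(q, d^l)`. -/
noncomputable def tau (a b : ℝ) (l d q : ℕ) : ℝ :=
  if q ∣ d ^ l then 1
  else max (-(a * ((q / Nat.gcd q (d ^ l) : ℕ) : ℝ) ^ (-b))) (-1)

/-!
For `d = p^(ej)` and `q = p^k` one has `τ = 1` once `k ≤ ejl`, and otherwise
`τ ≥ -a u^(k - ejl)` with `u = p^(-b) ≤ 1`, besides `τ ≥ -1` always. Induct on `s`. If `k ≤ esl`,
the last term is `μ^s` and `-μ^s/(1-μ) + μ^s = -μ^(s+1)/(1-μ)`. If `esl < k`, then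
`k - ejl ≥ 1 + el(s-j)` for every `j < s`, so with `y = u^(el)` the sum is at least
`-(a u ∑_{j<s} μ^j y^(s-j) + μ^s)`. The geometric sum is at most `μ^s y/(μ-y)`, and the hypothesis
on `p^(bel) = 1/y` says exactly that `(1 + a u y/(μ-y))(1-μ) ≤ μ`, which closes the bound.
-/

lemma neg_one_le_tau (a b : ℝ) (l d q : ℕ) : -1 ≤ tau a b l d q := by
  unfold tau
  split_ifs
  · norm_num
  · exact le_max_right _ _

section PrimePower

variable {a b : ℝ} {l p m k : ℕ}

lemma tau_prime_pow_of_le (h : k ≤ m * l) : tau a b l (p ^ m) (p ^ k) = 1 := by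
  rw [tau, if_pos (by rw [← pow_mul]; exact pow_dvd_pow p h)]

lemma tau_prime_pow_of_lt (hp : p.Prime) (h : m * l < k) :
    tau a b l (p ^ m) (p ^ k) = max (-(a * ((p : ℝ) ^ (-b)) ^ (k - m * l))) (-1) := by
  have hdvd : ¬ p ^ k ∣ (p ^ m) ^ l := by
    rw [← pow_mul, Nat.pow_dvd_pow_iff_le_right hp.one_lt]
    omega
  rw [tau, if_neg hdvd, ← pow_mul, Nat.gcd_eq_right (pow_dvd_pow p h.le),
    Nat.pow_div h.le hp.pos, Nat.cast_pow, ← Real.rpow_pow_comm (Nat.cast_nonneg p)]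

lemma neg_mul_pow_le_tau_prime_pow (hp : p.Prime) (ha : 0 ≤ a) (hb : 0 ≤ b) {n : ℕ}
    (hn : 0 < n) (h : m * l + n ≤ k) :
    -(a * ((p : ℝ) ^ (-b)) ^ n) ≤ tau a b l (p ^ m) (p ^ k) := by
  have hu : (p : ℝ) ^ (-b) ≤ 1 :=
    Real.rpow_le_one_of_one_le_of_nonpos (by exact_mod_cast hp.one_lt.le) (by linarith)
  have hu0 : 0 ≤ (p : ℝ) ^ (-b) := by positivity
  rw [tau_prime_pow_of_lt hp (by omega)]
  exact (neg_le_neg (mul_le_mul_of_nonneg_left (pow_le_pow_of_le_one hu0 hu (by omega)) ha)).trans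
    (le_max_left _ _)

end PrimePower

lemma neg_le_sum_tau_of_lt {a b μ : ℝ} {l p k e s : ℕ} (hp : p.Prime) (ha : 0 ≤ a)
    (hb : 0 ≤ b) (hμ : 0 ≤ μ) (h : e * s * l < k) :
    -(a * (p : ℝ) ^ (-b) *
        ∑ j ∈ Finset.range s, μ ^ j * (((p : ℝ) ^ (-b)) ^ (e * l)) ^ (s - j) + μ ^ s) ≤
      ∑ j ∈ Finset.range (s + 1), μ ^ j * tau a b l (p ^ (e * j)) (p ^ k) := by
  rw [Finset.sum_range_succ, neg_add, Finset.mul_sum, ← Finset.sum_neg_distrib]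
  refine add_le_add (Finset.sum_le_sum fun j hj => ?_) ?_
  · obtain ⟨d, rfl⟩ : ∃ d, s = j + d := ⟨s - j, by have := Finset.mem_range.mp hj; omega⟩
    have hexp : e * j * l + (e * l * d + 1) ≤ k := by
      have : e * (j + d) * l = e * j * l + e * l * d := by ring
      omega
    have htau := neg_mul_pow_le_tau_prime_pow hp ha hb (Nat.succ_pos _) hexp
    rw [pow_succ, pow_mul] at htau
    rw [Nat.add_sub_cancel_left]
    linarith [mul_le_mul_of_nonneg_left htau (pow_nonneg hμ j)]
  · simpa using mul_le_mul_of_nonneg_left (neg_one_le_tau a b l (p ^ (e * s)) (p ^ k))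
      (pow_nonneg hμ s)

lemma sum_pow_mul_pow_sub_mul_le {μ y : ℝ} (hy : 0 ≤ y) (n : ℕ) :
    (∑ j ∈ Finset.range n, μ ^ j * y ^ (n - j)) * (μ - y) ≤ μ ^ n * y := by
  have hshift : ∑ j ∈ Finset.range n, μ ^ j * y ^ (n - j) =
      (∑ j ∈ Finset.range n, μ ^ j * y ^ (n - 1 - j)) * y := by
    rw [Finset.sum_mul]
    refine Finset.sum_congr rfl fun j hj => ?_
    rw [mul_assoc, ← pow_succ]
    have := Finset.mem_range.mp hj
    congr 2
    omega
  rw [hshift, mul_assoc, mul_comm y, ← mul_assoc, geom_sum₂_mul]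
  nlinarith [pow_nonneg hy n]

lemma mul_sum_add_pow_le_of_le_inv {c μ y : ℝ} (hc : 0 < c) (hy : 0 < y) (hμ1 : μ < 1)
    (hμ2 : 1 / 2 < μ) (h : (c * (1 - μ) + 2 * μ - 1) / (μ * (2 * μ - 1)) ≤ y⁻¹)
    (n : ℕ) :
    c * ∑ j ∈ Finset.range n, μ ^ j * y ^ (n - j) + μ ^ n ≤ μ ^ (n + 1) / (1 - μ) := by
  have h' : y * (c * (1 - μ) + 2 * μ - 1) ≤ μ * (2 * μ - 1) := by
    rw [div_le_iff₀ (by nlinarith), inv_mul_eq_div, le_div_iff₀ hy] at h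
    linarith
  have hyμ : y < μ := by nlinarith [mul_pos (mul_pos hc hy) (sub_pos.mpr hμ1)]
  set S := ∑ j ∈ Finset.range n, μ ^ j * y ^ (n - j)
  have hS := sum_pow_mul_pow_sub_mul_le hy.le n (μ := μ)
  have hμn : 0 < μ ^ n := pow_pos (by linarith) n
  have key : c * S * (1 - μ) ≤ μ ^ n * (2 * μ - 1) := by
    refine le_of_mul_le_mul_right ?_ (sub_pos.mpr hyμ)
    nlinarith [mul_le_mul_of_nonneg_left hS (le_of_lt (mul_pos hc (sub_pos.mpr hμ1)))]
  rw [le_div_iff₀ (sub_pos.mpr hμ1), pow_succ]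
  linarith

theorem neg_pow_div_le_sum_tau {a b μ : ℝ} {l p e k : ℕ} (hp : p.Prime) (ha : 0 < a)
    (hb : 0 ≤ b) (hμ1 : μ < 1) (hμ2 : 1 / 2 < μ)
    (hcond : (a * (p : ℝ) ^ (-b) * (1 - μ) + 2 * μ - 1) / (μ * (2 * μ - 1)) ≤
      (((p : ℝ) ^ (-b)) ^ (e * l))⁻¹)
    (hk : 0 < k) (s : ℕ) :
    -(μ ^ (s + 1) / (1 - μ)) ≤
      ∑ j ∈ Finset.range (s + 1), μ ^ j * tau a b l (p ^ (e * j)) (p ^ k) := by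
  have hu : 0 < (p : ℝ) ^ (-b) := Real.rpow_pos_of_pos (by exact_mod_cast hp.pos) _
  have of_lt : ∀ s, e * s * l < k → -(μ ^ (s + 1) / (1 - μ)) ≤
      ∑ j ∈ Finset.range (s + 1), μ ^ j * tau a b l (p ^ (e * j)) (p ^ k) := fun s h =>
    (neg_le_neg <| mul_sum_add_pow_le_of_le_inv (mul_pos ha hu) (pow_pos hu _) hμ1 hμ2
      hcond s).trans (neg_le_sum_tau_of_lt hp ha.le hb (by linarith) h)
  induction s with
  | zero => exact of_lt 0 (by simpa using hk)
  | succ s ih =>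
    by_cases h : e * (s + 1) * l < k
    · exact of_lt _ h
    rw [Finset.sum_range_succ, tau_prime_pow_of_le (not_lt.mp h), mul_one]
    have hμ : μ ^ (s + 1 + 1) / (1 - μ) = μ ^ (s + 1) / (1 - μ) - μ ^ (s + 1) := by
      field_simp [(sub_pos.mpr hμ1).ne']
      ring
    linarith

theorem stmt_15_general (a b : ℝ) (l : ℕ) (ha : 0 < a) (hb0 : 0 < b)
    (p : ℕ) (hp : p.Prime) (μ : ℝ) (hμ1 : μ < 1) (hμ2 : 1 / 2 < μ)
    (e : ℕ)
    (hcond : (a * (p : ℝ) ^ (-b) * (1 - μ) + 2 * μ - 1) / (μ * (2 * μ - 1)) ≤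
      (p : ℝ) ^ (b * (e : ℝ) * (l : ℝ))) :
    ∀ s k : ℕ, 1 ≤ s → 1 ≤ k →
      -(μ ^ (s + 1) / (1 - μ)) ≤
        ∑ j ∈ Finset.range (s + 1), μ ^ j * tau a b l (p ^ (e * j)) (p ^ k) := by
  intro s k _ hk
  have hpow : (p : ℝ) ^ (b * (e : ℝ) * (l : ℝ)) = (((p : ℝ) ^ (-b)) ^ (e * l))⁻¹ := by
    rw [Real.rpow_neg (Nat.cast_nonneg p), inv_pow, inv_inv,
      ← Real.rpow_mul_natCast (Nat.cast_nonneg p), Nat.cast_mul, mul_assoc]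
  exact neg_pow_div_le_sum_tau hp ha hb0.le hμ1 hμ2 (hpow ▸ hcond) hk s

/-- If `p` is a prime, `1 > μ > 1/2`, and `e ≥ 1` is an integer with
`p^{bel} ≥ (a p^{−b}(1 − μ) + 2μ − 1)/(μ(2μ − 1))`, then for all positive integers
`s, k`: `∑_{j=0}^{s} μ^j τ(p^{ej}, p^k) ≥ −μ^{s+1}/(1 − μ)`. -/
theorem stmt_15 (a b : ℝ) (l : ℕ) (ha : 0 < a) (hb0 : 0 < b) (hb1 : b < 1) (hl : 1 ≤ l)
    (p : ℕ) (hp : p.Prime) (μ : ℝ) (hμ1 : μ < 1) (hμ2 : 1 / 2 < μ)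
    (e : ℕ) (he : 1 ≤ e)
    (hcond : (a * (p : ℝ) ^ (-b) * (1 - μ) + 2 * μ - 1) / (μ * (2 * μ - 1)) ≤
      (p : ℝ) ^ (b * (e : ℝ) * (l : ℝ))) :
    ∀ s k : ℕ, 1 ≤ s → 1 ≤ k →
      -(μ ^ (s + 1) / (1 - μ)) ≤
        ∑ j ∈ Finset.range (s + 1), μ ^ j * tau a b l (p ^ (e * j)) (p ^ k) :=
  stmt_15_general a b l ha hb0 p hp μ hμ1 hμ2 e hcond
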